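/- Prune-by-dominance (Lemma 2 of the paper): Let F ⊆ V be a set of vertices such that every neighbor of every vertex of F also lies in a set A ⊇ F of assigned vertices, with partial configuration σ_A on A. Suppose there exists another partial configuration σ'_A on A, agreeing with σ_A outside F, such that the partial energy localized on F satisfies E_F(σ'_A) < E_F(σ_A). Then for every complete configuration σ extending σ_A there exists a complete configuration σ' with E(σ') < E(σ); in particular no extension of σ_A is a ground state. -/

import Mathlib

/-!
Replacing `σ` on `F` by `σA'` changes only the terms of the energy localized on `F`, and since
every edge touching `F` has both endpoints in `A`, where `σ` agrees with `σA` and the modified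
configuration agrees with `σA'`, the total energy drops by exactly `E_F(σA) - E_F(σA') > 0`.
-/

namespace Ising

open Finset

variable {V : Type*} (E : Finset (V × V)) (J : V × V → ℝ) (h : V → ℝ)

def totalEnergy [Fintype V] (σ : V → ℝ) : ℝ :=
  -(∑ e ∈ E, J e * σ e.1 * σ e.2) - ∑ i, h i * σ i

variable [DecidableEq V]

def localEnergy (F : Finset V) (σ : V → ℝ) : ℝ :=
  -(∑ i ∈ F, h i * σ i)
    - ∑ e ∈ E.filter (fun e => e.1 ∈ F ∨ e.2 ∈ F), J e * σ e.1 * σ e.2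

def exteriorEnergy [Fintype V] (F : Finset V) (σ : V → ℝ) : ℝ :=
  -(∑ e ∈ E.filter (fun e => ¬(e.1 ∈ F ∨ e.2 ∈ F)), J e * σ e.1 * σ e.2)
    - ∑ i ∈ Fᶜ, h i * σ i

variable {E J h}

theorem totalEnergy_eq_localEnergy_add_exteriorEnergy [Fintype V] (F : Finset V) (σ : V → ℝ) :
    totalEnergy E J h σ = localEnergy E J h F σ + exteriorEnergy E J h F σ := by
  rw [totalEnergy, localEnergy, exteriorEnergy,
    ← sum_filter_add_sum_filter_not E (fun e => e.1 ∈ F ∨ e.2 ∈ F), ← sum_add_sum_compl F]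
  ring

theorem exteriorEnergy_congr [Fintype V] {F : Finset V} {σ τ : V → ℝ}
    (hστ : ∀ i ∉ F, σ i = τ i) : exteriorEnergy E J h F σ = exteriorEnergy E J h F τ := by
  have hedge : ∀ e ∈ E.filter (fun e => ¬(e.1 ∈ F ∨ e.2 ∈ F)),
      J e * σ e.1 * σ e.2 = J e * τ e.1 * τ e.2 := by
    intro e he
    obtain ⟨h₁, h₂⟩ := not_or.mp (mem_filter.mp he).2
    rw [hστ _ h₁, hστ _ h₂]
  have hvertex : ∀ i ∈ Fᶜ, h i * σ i = h i * τ i := fun i hi => by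
    rw [hστ i (mem_compl.mp hi)]
  rw [exteriorEnergy, exteriorEnergy, sum_congr rfl hedge, sum_congr rfl hvertex]

theorem totalEnergy_sub_totalEnergy [Fintype V] {F : Finset V} {σ τ : V → ℝ}
    (hστ : ∀ i ∉ F, σ i = τ i) :
    totalEnergy E J h σ - totalEnergy E J h τ =
      localEnergy E J h F σ - localEnergy E J h F τ := by
  rw [totalEnergy_eq_localEnergy_add_exteriorEnergy F σ,
    totalEnergy_eq_localEnergy_add_exteriorEnergy F τ, exteriorEnergy_congr hστ]
  ring

theorem localEnergy_congr {A F : Finset V} (hFA : F ⊆ A)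
    (hInt : ∀ i ∈ F, ∀ e ∈ E, (e.1 = i → e.2 ∈ A) ∧ (e.2 = i → e.1 ∈ A))
    {σ τ : V → ℝ} (hστ : ∀ i ∈ A, σ i = τ i) :
    localEnergy E J h F σ = localEnergy E J h F τ := by
  have hedge : ∀ e ∈ E.filter (fun e => e.1 ∈ F ∨ e.2 ∈ F),
      J e * σ e.1 * σ e.2 = J e * τ e.1 * τ e.2 := by
    intro e he
    obtain ⟨heE, hF⟩ := mem_filter.mp he
    have hA : e.1 ∈ A ∧ e.2 ∈ A := by
      rcases hF with h₁ | h₂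
      · exact ⟨hFA h₁, (hInt _ h₁ e heE).1 rfl⟩
      · exact ⟨(hInt _ h₂ e heE).2 rfl, hFA h₂⟩
    rw [hστ _ hA.1, hστ _ hA.2]
  have hvertex : ∀ i ∈ F, h i * σ i = h i * τ i := fun i hi => by rw [hστ i (hFA hi)]
  rw [localEnergy, localEnergy, sum_congr rfl hedge, sum_congr rfl hvertex]

end Ising

open Ising in
theorem prune_by_dominance_general {V : Type*} [Fintype V] [DecidableEq V]
    (E : Finset (V × V)) (J : V × V → ℝ) (h : V → ℝ)
    (A F : Finset V) (hFA : F ⊆ A)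
    (hInt : ∀ i ∈ F, ∀ e ∈ E, (e.1 = i → e.2 ∈ A) ∧ (e.2 = i → e.1 ∈ A))
    (σA σA' : V → ℝ)
    (hσA' : ∀ i, σA' i = 1 ∨ σA' i = -1)
    (hagree : ∀ i ∈ A, i ∉ F → σA i = σA' i)
    (hless :
      (-(∑ i ∈ F, h i * σA' i)
          - ∑ e ∈ E.filter (fun e => e.1 ∈ F ∨ e.2 ∈ F), J e * σA' e.1 * σA' e.2) <
        (-(∑ i ∈ F, h i * σA i)
          - ∑ e ∈ E.filter (fun e => e.1 ∈ F ∨ e.2 ∈ F), J e * σA e.1 * σA e.2)) :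
    ∀ σ : V → ℝ, (∀ i, σ i = 1 ∨ σ i = -1) → (∀ i ∈ A, σ i = σA i) →
      (∃ σ' : V → ℝ, (∀ i, σ' i = 1 ∨ σ' i = -1) ∧
        (-(∑ e ∈ E, J e * σ' e.1 * σ' e.2) - ∑ i, h i * σ' i) <
          (-(∑ e ∈ E, J e * σ e.1 * σ e.2) - ∑ i, h i * σ i)) ∧
      ¬ (∀ τ : V → ℝ, (∀ i, τ i = 1 ∨ τ i = -1) →
          (-(∑ e ∈ E, J e * σ e.1 * σ e.2) - ∑ i, h i * σ i) ≤
            (-(∑ e ∈ E, J e * τ e.1 * τ e.2) - ∑ i, h i * τ i)) := by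
  intro σ hσ hext
  set σ' := F.piecewise σA' σ
  have hσ' : ∀ i, σ' i = 1 ∨ σ' i = -1 := fun i => by
    by_cases hi : i ∈ F
    · simpa [σ', hi] using hσA' i
    · simpa [σ', hi] using hσ i
  have hσ'A : ∀ i ∈ A, σ' i = σA' i := fun i hi => by
    by_cases hiF : i ∈ F
    · simp [σ', hiF]
    · simp [σ', hiF, hext i hi, hagree i hi hiF]
  have hlt : totalEnergy E J h σ' < totalEnergy E J h σ := by
    have hdiff := totalEnergy_sub_totalEnergy (E := E) (J := J) (h := h)
      (fun i hi => F.piecewise_eq_of_notMem σA' σ hi : ∀ i ∉ F, σ' i = σ i)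
    rw [localEnergy_congr hFA hInt hσ'A, localEnergy_congr hFA hInt hext] at hdiff
    rw [localEnergy, localEnergy] at hdiff
    linarith
  exact ⟨⟨σ', hσ', hlt⟩, fun hground => (hground σ' hσ').not_gt hlt⟩

/-- Lemma 2, prune-by-dominance: Let `F ⊆ A` with every neighbor of every
vertex of `F` lying in the assigned set `A`.  If a partial configuration `σA'`, agreeing
with `σA` outside `F`, has strictly lower partial energy localized on `F`, then every
complete extension `σ` of `σA` is dominated by some configuration of strictly lower
total energy; in particular no extension of `σA` is a ground state. -/
theorem prune_by_dominance {V : Type*} [Fintype V] [DecidableEq V]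
    (E : Finset (V × V)) (J : V × V → ℝ) (h : V → ℝ)
    (A F : Finset V) (hFA : F ⊆ A)
    (hInt : ∀ i ∈ F, ∀ e ∈ E, (e.1 = i → e.2 ∈ A) ∧ (e.2 = i → e.1 ∈ A))
    (σA σA' : V → ℝ)
    (hσA : ∀ i, σA i = 1 ∨ σA i = -1) (hσA' : ∀ i, σA' i = 1 ∨ σA' i = -1)
    (hagree : ∀ i ∈ A, i ∉ F → σA i = σA' i)
    (hless :
      (-(∑ i ∈ F, h i * σA' i)
          - ∑ e ∈ E.filter (fun e => e.1 ∈ F ∨ e.2 ∈ F), J e * σA' e.1 * σA' e.2) <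
        (-(∑ i ∈ F, h i * σA i)
          - ∑ e ∈ E.filter (fun e => e.1 ∈ F ∨ e.2 ∈ F), J e * σA e.1 * σA e.2)) :
    ∀ σ : V → ℝ, (∀ i, σ i = 1 ∨ σ i = -1) → (∀ i ∈ A, σ i = σA i) →
      (∃ σ' : V → ℝ, (∀ i, σ' i = 1 ∨ σ' i = -1) ∧
        (-(∑ e ∈ E, J e * σ' e.1 * σ' e.2) - ∑ i, h i * σ' i) <
          (-(∑ e ∈ E, J e * σ e.1 * σ e.2) - ∑ i, h i * σ i)) ∧
      ¬ (∀ τ : V → ℝ, (∀ i, τ i = 1 ∨ τ i = -1) →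
          (-(∑ e ∈ E, J e * σ e.1 * σ e.2) - ∑ i, h i * σ i) ≤
            (-(∑ e ∈ E, J e * τ e.1 * τ e.2) - ∑ i, h i * τ i)) :=
  prune_by_dominance_general E J h A F hFA hInt σA σA' hσA' hagree hless
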